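/- arXiv:math/0207119 — 6 statements merged into one kernel-verified Lean document; each statement's English description precedes it below -/
import Mathlib

section
/- Let L be a left Bol loop in which every element of the commutant C(L) has finite odd order, i.e., for every a ∈ C(L) there exists an odd positive integer n with a^n = 1 (powers defined by a^0 = 1 and a^(k+1) = a·a^k). Then C(L) is a subloop of L: 1 ∈ C(L), C(L) is closed under multiplication, and for all a, b ∈ C(L) the unique solutions x and y of the equations a·x = b and y·a = b lie in C(L). -/
/-- A loop: a type with a binary operation and a two-sided neutral element,
in which the equations `a * x = b` and `y * a = b` have unique solutions. -/
class Loop' (L : Type*) extends Mul L, One L where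
  one_mul : ∀ x : L, 1 * x = x
  mul_one : ∀ x : L, x * 1 = x
  existsUnique_mul_left : ∀ a b : L, ∃! x : L, a * x = b
  existsUnique_mul_right : ∀ a b : L, ∃! y : L, y * a = b

/-- The (left) Bol identity. -/
def IsBolLoop (L : Type*) [Loop' L] : Prop :=
  ∀ x y z : L, x * (y * (x * z)) = (x * (y * x)) * z

/-- The commutant of a loop. -/
def commutant (L : Type*) [Loop' L] : Set L :=
  {a : L | ∀ x : L, a * x = x * a}

/-- Powers: `a ^ 0 = 1`, `a ^ (k+1) = a * a ^ k`. -/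
def lpow {L : Type*} [Loop' L] (a : L) : ℕ → L
  | 0 => 1
  | k + 1 => a * lpow a k

namespace BolAux

variable {L : Type*} [Loop' L]

lemma lp0 (a : L) : lpow a 0 = 1 := rfl

lemma lpS (a : L) (k : ℕ) : lpow a (k + 1) = a * lpow a k := rfl

lemma lp1 (a : L) : lpow a 1 = a := by
  rw [lpS, lp0, Loop'.mul_one]

lemma lp2 (a : L) : lpow a 2 = a * a := by
  rw [show (2 : ℕ) = 1 + 1 from rfl, lpS, lp1]

/-- Left alternative law in a left Bol loop. -/
lemma leftalt (hB : IsBolLoop L) (a z : L) : a * (a * z) = (a * a) * z := by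
  have h := hB a 1 z
  rwa [Loop'.one_mul, Loop'.one_mul] at h

/-- Key translation identity for a commutant element. -/
lemma key (hB : IsBolLoop L) {a : L} (ha : ∀ x : L, a * x = x * a) (w z : L) :
    ((a * a) * w) * z = a * (w * (a * z)) := by
  have h := hB a w z
  rw [← ha w, leftalt hB] at h
  exact h.symm

/-- `G`: translation by `a^(k+1)` splits; `H`: translation by `a^k` commutes with
translation by `a` (for `a` in the commutant). -/
lemma GH (hB : IsBolLoop L) {a : L} (ha : ∀ x : L, a * x = x * a) (k : ℕ) :
    (∀ z : L, lpow a (k + 1) * z = a * (lpow a k * z)) ∧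
    (∀ z : L, lpow a k * (a * z) = a * (lpow a k * z)) := by
  induction k with
  | zero =>
    constructor
    · intro z; rw [lp1, lp0, Loop'.one_mul]
    · intro z; rw [lp0, Loop'.one_mul, Loop'.one_mul]
  | succ k ih =>
    obtain ⟨G, H⟩ := ih
    have G' : ∀ z : L, lpow a (k + 2) * z = a * (lpow a (k + 1) * z) := by
      intro z
      have h1 : lpow a (k + 2) = (a * a) * lpow a k := by
        rw [lpS a (k + 1), lpS a k, leftalt hB]
      rw [h1, key hB ha, H z, G z]
    have H' : ∀ z : L, lpow a (k + 1) * (a * z) = a * (lpow a (k + 1) * z) := by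
      intro z
      rw [G (a * z), H z, G z]
    exact ⟨G', H'⟩

/-- Powers of a commutant element compose as translations. -/
lemma T1 (hB : IsBolLoop L) {a : L} (ha : ∀ x : L, a * x = x * a) :
    ∀ (i j : ℕ) (x : L), lpow a i * (lpow a j * x) = lpow a (i + j) * x := by
  intro i
  induction i with
  | zero => intro j x; rw [lp0, Loop'.one_mul, Nat.zero_add]
  | succ i ih =>
    intro j x
    rw [(GH hB ha i).1, ih j x, show i + 1 + j = (i + j) + 1 from by omega,
      (GH hB ha (i + j)).1 x]

/-- Main iterated Bol identity for a commutant element. -/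
lemma CM (hB : IsBolLoop L) {a : L} (ha : ∀ x : L, a * x = x * a) :
    ∀ (m : ℕ) (y z : L),
      (lpow a (2 * m) * y) * z = lpow a m * (y * (lpow a m * z)) := by
  intro m
  induction m with
  | zero =>
    intro y z
    rw [Nat.mul_zero, lp0, Loop'.one_mul, Loop'.one_mul, Loop'.one_mul]
  | succ m ih =>
    intro y z
    have h3 : lpow a (2 * (m + 1)) * y = (a * a) * (lpow a (2 * m) * y) := by
      rw [← lp2, T1 hB ha 2 (2 * m) y, show 2 + 2 * m = 2 * (m + 1) from by omega]
    rw [h3, key hB ha (lpow a (2 * m) * y) z, ih y (a * z), (GH hB ha m).2 z,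
      ← (GH hB ha m).1 z, ← (GH hB ha m).1 (y * (lpow a (m + 1) * z))]

/-- Pushing a right factor `a^k` (with `a^n = 1`) to the left. -/
lemma Fk (hB : IsBolLoop L) {a : L} (ha : ∀ x : L, a * x = x * a) {n k : ℕ}
    (hn : lpow a n = 1) (hk : k ≤ n) (x w : L) :
    x * (lpow a k * w) = lpow a (n - k) * ((lpow a (2 * k) * x) * w) := by
  have h := CM hB ha (n - k) (lpow a (2 * k) * x) (lpow a k * w)
  rw [T1 hB ha (2 * (n - k)) (2 * k) x, show 2 * (n - k) + 2 * k = n + n from by omega,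
    ← T1 hB ha n n x, hn, Loop'.one_mul, Loop'.one_mul,
    T1 hB ha (n - k) k w, show n - k + k = n from by omega, hn, Loop'.one_mul] at h
  exact h

/-- Powers of a commutant element of finite order lie in the commutant. -/
lemma PC (hB : IsBolLoop L) {a : L} (ha : ∀ x : L, a * x = x * a) {n k : ℕ}
    (hn : lpow a n = 1) (hk : k ≤ n) (x : L) :
    x * lpow a k = lpow a k * x := by
  have h := Fk hB ha hn hk x (1 : L)
  rw [Loop'.mul_one, Loop'.mul_one] at h
  rw [h, T1 hB ha, show n - k + 2 * k = k + n from by omega, ← T1 hB ha k n x, hn,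
    Loop'.one_mul]

/-- Central lemma: `d² e` is in the commutant for `d, e` in the commutant. -/
lemma sq_mem (hB : IsBolLoop L)
    (hodd : ∀ a ∈ commutant L, ∃ n : ℕ, Odd n ∧ 0 < n ∧ lpow a n = 1)
    {d e : L} (hd : d ∈ commutant L) (he : e ∈ commutant L) :
    lpow d 2 * e ∈ commutant L := by
  have hd' : ∀ x : L, d * x = x * d := hd
  have he' : ∀ x : L, e * x = x * e := he
  obtain ⟨n, hno, hnp, hn⟩ := hodd d hd
  obtain ⟨p, hpo, hpp, hp⟩ := hodd e he
  by_cases hn1 : n = 1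
  · -- then d = 1
    subst hn1
    rw [lp1] at hn
    subst hn
    have h1 : lpow (1 : L) 2 * e = e := by
      rw [lp2, Loop'.one_mul, Loop'.one_mul]
    rw [h1]
    exact he
  have h2n : 2 ≤ n := by obtain ⟨t, ht⟩ := hno; omega
  by_cases hp1 : p = 1
  · -- then e = 1
    subst hp1
    rw [lp1] at hp
    subst hp
    rw [Loop'.mul_one]
    exact fun x => (PC hB hd' hn h2n x).symm
  have h2p : 2 ≤ p := by obtain ⟨t, ht⟩ := hpo; omega
  intro u
  have key2 : ∀ W z : L, (lpow d 2 * W) * z = d * (W * (d * z)) := by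
    intro W z; rw [lp2]; exact key hB hd' W z
  have hLHS : (lpow d 2 * e) * u = d * (e * (d * u)) := key2 e u
  have h2 : lpow d (2 * 2) * u = lpow d 2 * (lpow d 2 * u) := by
    rw [T1 hB hd' 2 2 u, show (2 + 2 : ℕ) = 2 * 2 from by norm_num]
  have h4 : d * e = lpow e 1 * d := by rw [lp1]; exact hd' e
  have h7 : d * (lpow e 2 * (lpow d 2 * u)) = e * (lpow d 2 * (e * (d * u))) := by
    have e2c : ∀ x : L, x * lpow e 2 = lpow e 2 * x := PC hB he' hp h2p
    have d2c : ∀ x : L, x * lpow d 2 = lpow d 2 * x := PC hB hd' hn h2n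
    have hdu : lpow d 2 * u = d * (d * u) := by rw [lp2, ← leftalt hB]
    rw [hdu, hB d (lpow e 2) (d * u), ← e2c d, leftalt hB d (lpow e 2), ← lp2 d,
      ← d2c (lpow e 2), lp2 e]
    exact key hB he' (lpow d 2) (d * u)
  have h8 : lpow e (p - 1) * (e * (lpow d 2 * (e * (d * u)))) =
      lpow d 2 * (e * (d * u)) := by
    calc lpow e (p - 1) * (e * (lpow d 2 * (e * (d * u))))
        = lpow e (p - 1) * (lpow e 1 * (lpow d 2 * (e * (d * u)))) := by rw [lp1]
      _ = lpow e (p - 1 + 1) * (lpow d 2 * (e * (d * u))) := T1 hB he' _ _ _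
      _ = lpow e p * (lpow d 2 * (e * (d * u))) := by
          rw [show p - 1 + 1 = p from by omega]
      _ = lpow d 2 * (e * (d * u)) := by rw [hp, Loop'.one_mul]
  have hRHS : u * (lpow d 2 * e) = d * (e * (d * u)) := by
    calc u * (lpow d 2 * e)
        = lpow d (n - 2) * ((lpow d (2 * 2) * u) * e) := Fk hB hd' hn h2n u e
      _ = lpow d (n - 2) * ((lpow d 2 * (lpow d 2 * u)) * e) := by rw [h2]
      _ = lpow d (n - 2) * (d * ((lpow d 2 * u) * (d * e))) := by
          rw [key2 (lpow d 2 * u) e]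
      _ = lpow d (n - 2) * (d * ((lpow d 2 * u) * (lpow e 1 * d))) := by rw [h4]
      _ = lpow d (n - 2) *
            (d * (lpow e (p - 1) * ((lpow e (2 * 1) * (lpow d 2 * u)) * d))) := by
          rw [Fk hB he' hp (by omega : 1 ≤ p) (lpow d 2 * u) d]
      _ = lpow d (n - 2) *
            (d * (lpow e (p - 1) * (d * (lpow e 2 * (lpow d 2 * u))))) := by
          rw [show (2 * 1 : ℕ) = 2 from by norm_num,
            ← hd' (lpow e 2 * (lpow d 2 * u))]
      _ = lpow d (n - 2) *
            (d * (lpow e (p - 1) * (e * (lpow d 2 * (e * (d * u)))))) := by rw [h7]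
      _ = lpow d (n - 2) * (d * (lpow d 2 * (e * (d * u)))) := by rw [h8]
      _ = lpow d (n - 2) * (lpow d (2 + 1) * (e * (d * u))) := by
          rw [(GH hB hd' 2).1 (e * (d * u))]
      _ = lpow d (n - 2 + (2 + 1)) * (e * (d * u)) := T1 hB hd' _ _ _
      _ = lpow d (1 + n) * (e * (d * u)) := by
          rw [show n - 2 + (2 + 1) = 1 + n from by omega]
      _ = lpow d 1 * (lpow d n * (e * (d * u))) := (T1 hB hd' 1 n _).symm
      _ = d * (e * (d * u)) := by rw [lp1, hn, Loop'.one_mul]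
  exact hLHS.trans hRHS.symm

/-- The commutant of a left Bol loop whose commutant elements have odd order is
closed under multiplication. -/
lemma mul_mem (hB : IsBolLoop L)
    (hodd : ∀ a ∈ commutant L, ∃ n : ℕ, Odd n ∧ 0 < n ∧ lpow a n = 1)
    {a b : L} (ha : a ∈ commutant L) (hb : b ∈ commutant L) :
    a * b ∈ commutant L := by
  have ha' : ∀ x : L, a * x = x * a := ha
  have hb' : ∀ x : L, b * x = x * b := hb
  obtain ⟨p, hpo, hpp, hp⟩ := hodd b hb
  obtain ⟨t, ht⟩ := hpo
  have hc : lpow b (t + 1) ∈ commutant L :=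
    fun x => (PC hB hb' hp (by omega : t + 1 ≤ p) x).symm
  have hcc : lpow (lpow b (t + 1)) 2 = b := by
    rw [lp2]
    calc lpow b (t + 1) * lpow b (t + 1)
        = lpow b (t + 1) * (lpow b (t + 1) * 1) := by rw [Loop'.mul_one]
      _ = lpow b ((t + 1) + (t + 1)) * 1 := T1 hB hb' _ _ _
      _ = lpow b (p + 1) * 1 := by rw [show (t + 1) + (t + 1) = p + 1 from by omega]
      _ = (b * lpow b p) * 1 := by rw [lpS]
      _ = b := by rw [hp, Loop'.mul_one, Loop'.mul_one]
  have hsq := sq_mem hB hodd hc ha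
  rw [hcc] at hsq
  rw [ha' b]
  exact hsq

end BolAux

open BolAux in
/-- If every element of the commutant of a left Bol loop has
finite odd order, then the commutant is a subloop. -/
theorem commutant_subloop_of_odd_order (L : Type*) [Loop' L] (hBol : IsBolLoop L)
    (hodd : ∀ a ∈ commutant L, ∃ n : ℕ, Odd n ∧ 0 < n ∧ lpow a n = 1) :
    (1 : L) ∈ commutant L ∧
    (∀ a ∈ commutant L, ∀ b ∈ commutant L, a * b ∈ commutant L) ∧
    (∀ a ∈ commutant L, ∀ b ∈ commutant L, ∀ x : L, a * x = b → x ∈ commutant L) ∧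
    (∀ a ∈ commutant L, ∀ b ∈ commutant L, ∀ y : L, y * a = b → y ∈ commutant L) := by
  refine ⟨fun x => by rw [Loop'.one_mul, Loop'.mul_one], fun a ha b hb => mul_mem hBol hodd ha hb, ?_, ?_⟩
  · intro a ha b hb x hx
    have ha' : ∀ t : L, a * t = t * a := ha
    obtain ⟨n, hno, hnp, hn⟩ := hodd a ha
    have hx₀ : a * (lpow a (n - 1) * b) = b := by
      calc a * (lpow a (n - 1) * b)
          = lpow a 1 * (lpow a (n - 1) * b) := by rw [lp1]
        _ = lpow a (1 + (n - 1)) * b := T1 hBol ha' _ _ _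
        _ = lpow a n * b := by rw [show 1 + (n - 1) = n from by omega]
        _ = b := by rw [hn, Loop'.one_mul]
    have hmem : lpow a (n - 1) * b ∈ commutant L :=
      mul_mem hBol hodd (fun t => (PC hBol ha' hn (by omega : n - 1 ≤ n) t).symm) hb
    have huniq := (Loop'.existsUnique_mul_left a b).unique hx hx₀
    rw [huniq]
    exact hmem
  · intro a ha b hb y hy
    have ha' : ∀ t : L, a * t = t * a := ha
    obtain ⟨n, hno, hnp, hn⟩ := hodd a ha
    have hx₀ : a * (lpow a (n - 1) * b) = b := by
      calc a * (lpow a (n - 1) * b)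
          = lpow a 1 * (lpow a (n - 1) * b) := by rw [lp1]
        _ = lpow a (1 + (n - 1)) * b := T1 hBol ha' _ _ _
        _ = lpow a n * b := by rw [show 1 + (n - 1) = n from by omega]
        _ = b := by rw [hn, Loop'.one_mul]
    have hy₀ : (lpow a (n - 1) * b) * a = b := by
      rw [← ha' (lpow a (n - 1) * b)]
      exact hx₀
    have hmem : lpow a (n - 1) * b ∈ commutant L :=
      mul_mem hBol hodd (fun t => (PC hBol ha' hn (by omega : n - 1 ≤ n) t).symm) hb
    have huniq := (Loop'.existsUnique_mul_right a b).unique hy hy₀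
    rw [huniq]
    exact hmem
end

section
/- Let L be a finite left Bol loop whose cardinality is odd. Then the commutant C(L) is a subloop of L: 1 ∈ C(L), C(L) is closed under multiplication, and for all a, b ∈ C(L) the unique solutions x and y of the equations a·x = b and y·a = b lie in C(L). -/
section LoopBasics

variable {L : Type*} [Loop' L]

theorem loop_lcancel {a x y : L} (h : a * x = a * y) : x = y := by
  obtain ⟨w, hw, hu⟩ := Loop'.existsUnique_mul_left a (a * y)
  exact (hu x h).trans (hu y rfl).symm

theorem loop_rcancel {a x y : L} (h : x * a = y * a) : x = y := by
  obtain ⟨w, hw, hu⟩ := Loop'.existsUnique_mul_right a (y * a)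
  exact (hu x h).trans (hu y rfl).symm

/-- Left translation as a permutation. -/
noncomputable def Lp (a : L) : Equiv.Perm L :=
  Equiv.ofBijective (fun z => a * z)
    ⟨fun x y h => loop_lcancel h, fun b => (Loop'.existsUnique_mul_left a b).exists⟩

/-- Right translation as a permutation. -/
noncomputable def Rp (a : L) : Equiv.Perm L :=
  Equiv.ofBijective (fun z => z * a)
    ⟨fun x y h => loop_rcancel h, fun b => (Loop'.existsUnique_mul_right a b).exists⟩

@[simp] theorem Lp_apply (a z : L) : Lp a z = a * z := rfl
@[simp] theorem Rp_apply (a z : L) : Rp a z = z * a := rfl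

theorem Lp_one : Lp (1 : L) = 1 :=
  Equiv.ext fun z => Loop'.one_mul z

theorem Rp_one : Rp (1 : L) = 1 :=
  Equiv.ext fun z => Loop'.mul_one z

theorem Rp_eq_Lp {c : L} (hc : ∀ x, c * x = x * c) : Rp c = Lp c :=
  Equiv.ext fun z => (hc z).symm

variable (hBol : IsBolLoop L)

include hBol

/-- Left alternative law. -/
theorem lalt (x z : L) : x * (x * z) = (x * x) * z := by
  have h := hBol x 1 z
  rwa [Loop'.one_mul, Loop'.one_mul] at h

theorem Lp_bolconj (x y : L) : Lp (x * (y * x)) = Lp x * Lp y * Lp x :=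
  Equiv.ext fun z => (hBol x y z).symm

theorem Lp_mul_self (a : L) : Lp (a * a) = Lp a * Lp a :=
  Equiv.ext fun z => (lalt hBol a z).symm

theorem Rp_bol (x z : L) : Lp x * Rp (x * z) = Rp z * Lp x * Rp x :=
  Equiv.ext fun y => hBol x y z

theorem Rp_comm_mul {c : L} (hc : ∀ x, c * x = x * c) (z : L) :
    Rp (c * z) = (Lp c)⁻¹ * (Rp z * Lp c * Lp c) := by
  have h := Rp_bol hBol c z
  rw [Rp_eq_Lp hc] at h
  rw [eq_inv_mul_iff_mul_eq]
  exact h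

/-- The square of a commutant element is in the commutant. -/
theorem sq_comm {a : L} (ha : ∀ x, a * x = x * a) :
    ∀ x : L, (a * a) * x = x * (a * a) := by
  intro x
  have h := hBol a x a
  rw [← ha x] at h
  rw [lalt hBol a x] at h
  rw [← ha ((a * a) * x)] at h
  exact (loop_lcancel h).symm

end LoopBasics

section GroupLemmas

variable {G : Type*} [Group G]

theorem cc_lemma (A B : G)
    (h1 : A⁻¹ * (B * A * A) = B⁻¹ * (A * B * B))
    (h2 : (A * A)⁻¹ * (B * (A * A) * (A * A)) = B⁻¹ * ((A * A) * B * B)) :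
    A * B * A * B⁻¹ = B * A * B⁻¹ * A := by
  have e1 : B * A * A = A * (B⁻¹ * (A * B * B)) := by rw [← h1]; group
  have e2 : B * (A * (A * (A * A))) = (A * A) * (B⁻¹ * ((A * A) * B * B)) := by
    rw [← h2]; group
  have e3 : (A * A) * (B⁻¹ * ((A * A) * B * B)) = (B * A * A) * (A * A) := by
    rw [← e2]; group
  have e3' : (A * A) * (B⁻¹ * ((A * A) * B * B)) = (A * (B⁻¹ * (A * B * B))) * (A * A) := by
    rw [e3, e1]
  have e4 : A * (B⁻¹ * (A * A) * B * B) = B⁻¹ * (A * B * B) * (A * A) := by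
    refine mul_left_cancel (a := A) ?_
    rw [show A * (A * (B⁻¹ * (A * A) * B * B)) = (A * A) * (B⁻¹ * ((A * A) * B * B)) by group,
      e3']
    group
  have e5 : (B * B) * (A * A) = B * (A * (B⁻¹ * (A * B * B))) := by rw [← e1]; group
  have e6 : A * (B⁻¹ * (A * A) * B * B) = B⁻¹ * A * ((B * B) * (A * A)) := by
    rw [e4]; group
  have e7 : A * (B⁻¹ * (A * A) * B * B) = B⁻¹ * A * (B * (A * (B⁻¹ * (A * B * B)))) := by
    rw [e6, e5]
  have e8 : A * (B⁻¹ * A) = B⁻¹ * (A * (B * (A * B⁻¹))) := by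
    refine mul_right_cancel (b := A * (B * B)) ?_
    rw [show (A * (B⁻¹ * A)) * (A * (B * B)) = A * (B⁻¹ * (A * A) * B * B) by group, e7]
    group
  rw [show B * A * B⁻¹ * A = B * (A * (B⁻¹ * A)) by group, e8]
  group

theorem final_group (A B w : G)
    (com1 : B * A = (A * B) * w⁻¹)
    (hwA : w * A = A * w)
    (h3 : w * (w * w) = 1) :
    (A * A)⁻¹ * (B * (A * A) * (A * A)) = A * B * A := by
  have hA' : w⁻¹ * A = A * w⁻¹ := by
    rw [show w⁻¹ * A = w⁻¹ * ((A * w) * w⁻¹) by group, ← hwA]; group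
  have hBA3 : B * (A * (A * A)) = A * (A * (A * B)) := by
    calc B * (A * (A * A))
        = ((B * A) * A) * A := by group
      _ = (((A * B) * w⁻¹) * A) * A := by rw [com1]
      _ = ((A * B) * (w⁻¹ * A)) * A := by group
      _ = ((A * B) * (A * w⁻¹)) * A := by rw [hA']
      _ = ((A * (B * A)) * w⁻¹) * A := by group
      _ = ((A * ((A * B) * w⁻¹)) * w⁻¹) * A := by rw [com1]
      _ = (A * (A * B)) * (w⁻¹ * (w⁻¹ * A)) := by group
      _ = (A * (A * B)) * (w⁻¹ * (A * w⁻¹)) := by rw [hA']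
      _ = (A * (A * B)) * ((w⁻¹ * A) * w⁻¹) := by group
      _ = (A * (A * B)) * ((A * w⁻¹) * w⁻¹) := by rw [hA']
      _ = (A * (A * (B * A))) * (w⁻¹ * w⁻¹) := by group
      _ = (A * (A * ((A * B) * w⁻¹))) * (w⁻¹ * w⁻¹) := by rw [com1]
      _ = (A * (A * (A * B))) * (w * (w * w))⁻¹ := by group
      _ = (A * (A * (A * B))) * (1 : G)⁻¹ := by rw [h3]
      _ = A * (A * (A * B)) := by group
  calc (A * A)⁻¹ * (B * (A * A) * (A * A))
      = (A * A)⁻¹ * ((B * (A * (A * A))) * A) := by group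
    _ = (A * A)⁻¹ * ((A * (A * (A * B))) * A) := by rw [hBA3]
    _ = A * B * A := by group

theorem key_group (A B : G)
    (h1 : A⁻¹ * (B * A * A) = B⁻¹ * (A * B * B))
    (h2 : (A * A)⁻¹ * (B * (A * A) * (A * A)) = B⁻¹ * ((A * A) * B * B))
    (h2' : (B * B)⁻¹ * (A * (B * B) * (B * B)) = A⁻¹ * ((B * B) * A * A)) :
    (A * A)⁻¹ * (B * (A * A) * (A * A)) = A * B * A := by
  have CC3 := cc_lemma A B h1 h2
  have CC4 := cc_lemma B A h1.symm h2'
  have qA : (B⁻¹ * (A * B)) * A = A * (B⁻¹ * (A * B)) := by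
    rw [show (B⁻¹ * (A * B)) * A = B⁻¹ * ((A * B * A * B⁻¹) * B) by group, CC3]; group
  have hwA : (A⁻¹ * (B⁻¹ * (A * B))) * A = A * (A⁻¹ * (B⁻¹ * (A * B))) := by
    rw [show (A⁻¹ * (B⁻¹ * (A * B))) * A = A⁻¹ * ((B⁻¹ * (A * B)) * A) by group, qA]
    group
  have lhs_eq : A⁻¹ * (B * A * A) =
      (A * B) * ((A⁻¹ * (B⁻¹ * (A * B)))⁻¹ * (A⁻¹ * (B⁻¹ * (A * B)))⁻¹) := by
    rw [show A⁻¹ * (B * A * A) = A⁻¹ * ((B * A * B⁻¹ * A) * (A⁻¹ * (B * A))) by group, ← CC3]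
    group
  have rhs_eq : B⁻¹ * (A * B * B) = (A * B) * (A⁻¹ * (B⁻¹ * (A * B))) := by
    have h : (A * B) * (A⁻¹ * (B⁻¹ * (A * B))) = B⁻¹ * (A * B * B) := by
      rw [show (A * B) * (A⁻¹ * (B⁻¹ * (A * B)))
          = B⁻¹ * ((B * A * B * A⁻¹) * (B⁻¹ * (A * B))) by group, CC4]
      group
    exact h.symm
  have step : (A * B) * ((A⁻¹ * (B⁻¹ * (A * B)))⁻¹ * (A⁻¹ * (B⁻¹ * (A * B)))⁻¹)
      = (A * B) * (A⁻¹ * (B⁻¹ * (A * B))) := lhs_eq.symm.trans (h1.trans rhs_eq)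
  have hw : (A⁻¹ * (B⁻¹ * (A * B)))⁻¹ * (A⁻¹ * (B⁻¹ * (A * B)))⁻¹
      = A⁻¹ * (B⁻¹ * (A * B)) := mul_left_cancel step
  have h3 : (A⁻¹ * (B⁻¹ * (A * B))) * ((A⁻¹ * (B⁻¹ * (A * B))) * (A⁻¹ * (B⁻¹ * (A * B)))) = 1 := by
    nth_rewrite 1 [← hw]
    group
  exact final_group A B (A⁻¹ * (B⁻¹ * (A * B))) (by group) hwA h3

end GroupLemmas

section MainLemmas

variable {L : Type*} [Loop' L] (hBol : IsBolLoop L)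

include hBol in
/-- Lemma A: for `a, b` in the commutant, `(a*a)*b` is in the commutant. -/
theorem lemA {a b : L} (ha : ∀ x, a * x = x * a) (hb : ∀ x, b * x = x * b) :
    ∀ x : L, ((a * a) * b) * x = x * ((a * a) * b) := by
  intro x
  have haa := sq_comm hBol ha
  have hbb := sq_comm hBol hb
  have h1 : (Lp a)⁻¹ * (Lp b * Lp a * Lp a) = (Lp b)⁻¹ * (Lp a * Lp b * Lp b) := by
    have e1 := Rp_comm_mul hBol ha b
    have e2 := Rp_comm_mul hBol hb a
    rw [Rp_eq_Lp hb] at e1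
    rw [Rp_eq_Lp ha] at e2
    rw [← e1, ← e2, ha b]
  have h2 : (Lp a * Lp a)⁻¹ * (Lp b * (Lp a * Lp a) * (Lp a * Lp a))
      = (Lp b)⁻¹ * ((Lp a * Lp a) * Lp b * Lp b) := by
    have e1 := Rp_comm_mul hBol haa b
    have e2 := Rp_comm_mul hBol hb (a * a)
    rw [Rp_eq_Lp hb, Lp_mul_self hBol a] at e1
    rw [Rp_eq_Lp haa, Lp_mul_self hBol a] at e2
    rw [← e1, ← e2, haa b]
  have h2' : (Lp b * Lp b)⁻¹ * (Lp a * (Lp b * Lp b) * (Lp b * Lp b))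
      = (Lp a)⁻¹ * ((Lp b * Lp b) * Lp a * Lp a) := by
    have e1 := Rp_comm_mul hBol hbb a
    have e2 := Rp_comm_mul hBol ha (b * b)
    rw [Rp_eq_Lp ha, Lp_mul_self hBol b] at e1
    rw [Rp_eq_Lp hbb, Lp_mul_self hBol b] at e2
    rw [← e1, ← e2, hbb a]
  have key := key_group (Lp a) (Lp b) h1 h2 h2'
  have eR : Rp ((a * a) * b) = (Lp a * Lp a)⁻¹ * (Lp b * (Lp a * Lp a) * (Lp a * Lp a)) := by
    have e := Rp_comm_mul hBol haa b
    rw [Rp_eq_Lp hb, Lp_mul_self hBol a] at e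
    exact e
  have eL : Lp ((a * a) * b) = Lp a * Lp b * Lp a := by
    have helt : (a * a) * b = a * (b * a) := by rw [hb a, lalt hBol a b]
    rw [helt, Lp_bolconj hBol a b]
  have hperm : Rp ((a * a) * b) = Lp ((a * a) * b) := by rw [eR, eL]; exact key
  exact (Equiv.ext_iff.mp hperm x).symm

theorem Lp_pow_one (a : L) : ∀ k : ℕ, ((Lp a) ^ k) (1 : L) = lpow a k
  | 0 => by rw [pow_zero]; rfl
  | k + 1 => by
      rw [pow_succ', Equiv.Perm.mul_apply, Lp_pow_one a k]; rfl

include hBol in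
theorem Lp_lpow {a : L} (ha : ∀ x, a * x = x * a) :
    ∀ k : ℕ, Lp (lpow a k) = (Lp a) ^ k := by
  have key : ∀ k : ℕ, Lp (lpow a k) = (Lp a) ^ k ∧ Lp (lpow a (k + 1)) = (Lp a) ^ (k + 1) := by
    intro k
    induction k with
    | zero =>
        constructor
        · rw [show lpow a 0 = (1 : L) from rfl, Lp_one, pow_zero]
        · rw [show lpow a 1 = a * 1 from rfl, Loop'.mul_one, pow_one]
    | succ k ih =>
        refine ⟨ih.2, ?_⟩
        have h1 : lpow a (k + 2) = a * (lpow a k * a) := by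
          show a * lpow a (k + 1) = _
          rw [show lpow a (k + 1) = a * lpow a k from rfl, ha (lpow a k)]
        rw [h1, Lp_bolconj hBol a (lpow a k), ih.1, pow_succ, pow_succ']
  exact fun k => (key k).1

include hBol in
theorem Rp_lpow {a : L} (ha : ∀ x, a * x = x * a) :
    ∀ k : ℕ, Rp (lpow a k) = (Lp a) ^ k := by
  intro k
  induction k with
  | zero => rw [show lpow a 0 = (1 : L) from rfl, Rp_one, pow_zero]
  | succ k ih =>
      rw [show lpow a (k + 1) = a * lpow a k from rfl, Rp_comm_mul hBol ha (lpow a k), ih,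
        ← pow_succ, ← pow_succ, pow_succ', inv_mul_cancel_left]

include hBol in
theorem lpow_comm {a : L} (ha : ∀ x, a * x = x * a) (k : ℕ) :
    ∀ x : L, lpow a k * x = x * lpow a k := by
  intro x
  calc lpow a k * x = Lp (lpow a k) x := rfl
    _ = ((Lp a) ^ k) x := by rw [Lp_lpow hBol ha]
    _ = Rp (lpow a k) x := by rw [Rp_lpow hBol ha]
    _ = x * lpow a k := rfl

end MainLemmas

section SquareRoot

variable {L : Type*} [Loop' L] [Fintype L]

theorem orderOf_Lp_pos (a : L) : 0 < orderOf (Lp a) := by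
  classical
  exact (isOfFinOrder_iff_pow_eq_one.mpr
    ⟨Fintype.card (Equiv.Perm L), Fintype.card_pos, pow_card_eq_one⟩).orderOf_pos

theorem orderOf_Lp_odd (hBol : IsBolLoop L) (hodd : Odd (Fintype.card L))
    {a : L} (ha : ∀ x, a * x = x * a) : ¬ 2 ∣ orderOf (Lp a) := by
  classical
  intro hdvd
  obtain ⟨m, hm⟩ := hdvd
  have hn0 : 0 < orderOf (Lp a) := orderOf_Lp_pos a
  have hm0 : 0 < m := by omega
  haveI : Fact (Nat.Prime 2) := ⟨Nat.prime_two⟩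
  have hE2 : ((Lp a) ^ m) ^ 2 ^ 1 = 1 := by
    rw [pow_one, ← pow_mul, Nat.mul_comm, ← hm, pow_orderOf_eq_one]
  have hcard : ¬ (2 ∣ Fintype.card L) := by
    have := Nat.odd_iff.mp hodd
    omega
  obtain ⟨z, hz⟩ := Equiv.Perm.exists_fixed_point_of_prime hcard hE2
  rw [← Lp_lpow hBol ha m] at hz
  have h1 : lpow a m = 1 := by
    obtain ⟨y, hy, hu⟩ := Loop'.existsUnique_mul_right z z
    exact (hu (lpow a m) hz).trans (hu 1 (Loop'.one_mul z)).symm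
  have h2 : (Lp a) ^ m = 1 := by rw [← Lp_lpow hBol ha m, h1, Lp_one]
  have h3 := orderOf_dvd_of_pow_eq_one h2
  have h4 := Nat.le_of_dvd hm0 h3
  omega

theorem exists_sqrt (hBol : IsBolLoop L) (hodd : Odd (Fintype.card L))
    {a : L} (ha : ∀ x, a * x = x * a) :
    ∃ v : L, (∀ x, v * x = x * v) ∧ v * v = a := by
  classical
  set n := orderOf (Lp a) with hn
  have hn0 : 0 < n := orderOf_Lp_pos a
  have hnodd : ¬ 2 ∣ n := orderOf_Lp_odd hBol hodd ha
  set k := (n + 1) / 2 with hk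
  have hkk : k + k = n + 1 := by omega
  refine ⟨lpow a k, lpow_comm hBol ha k, ?_⟩
  calc lpow a k * lpow a k = Rp (lpow a k) (lpow a k) := rfl
    _ = ((Lp a) ^ k) (lpow a k) := by rw [Rp_lpow hBol ha]
    _ = ((Lp a) ^ k) (((Lp a) ^ k) (1 : L)) := by rw [Lp_pow_one]
    _ = ((Lp a) ^ k * (Lp a) ^ k) (1 : L) := rfl
    _ = ((Lp a) ^ (k + k)) (1 : L) := by rw [pow_add]
    _ = ((Lp a) ^ (n + 1)) (1 : L) := by rw [hkk]
    _ = ((Lp a) ^ n * Lp a) (1 : L) := by rw [pow_succ]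
    _ = ((Lp a) ^ n) (a * 1) := rfl
    _ = ((Lp a) ^ n) a := by rw [Loop'.mul_one]
    _ = a := by rw [pow_orderOf_eq_one]; rfl

end SquareRoot

/-- The commutant of a finite left Bol loop of odd order is a subloop. -/
theorem commutant_subloop_of_odd_card (L : Type*) [Loop' L] [Fintype L]
    (hBol : IsBolLoop L) (hodd : Odd (Fintype.card L)) :
    (1 : L) ∈ commutant L ∧
    (∀ a ∈ commutant L, ∀ b ∈ commutant L, a * b ∈ commutant L) ∧
    (∀ a ∈ commutant L, ∀ b ∈ commutant L, ∀ x : L, a * x = b → x ∈ commutant L) ∧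
    (∀ a ∈ commutant L, ∀ b ∈ commutant L, ∀ y : L, y * a = b → y ∈ commutant L) := by
  classical
  have hone : (1 : L) ∈ commutant L := by
    intro x
    rw [Loop'.one_mul, Loop'.mul_one]
  have hmul : ∀ a ∈ commutant L, ∀ b ∈ commutant L, a * b ∈ commutant L := by
    intro a ha b hb
    obtain ⟨v, hv, hvv⟩ := exists_sqrt hBol hodd ha
    have h := lemA hBol hv hb
    rw [hvv] at h
    exact h
  have hldiv : ∀ a ∈ commutant L, ∀ b ∈ commutant L, ∀ x : L, a * x = b → x ∈ commutant L := by
    intro a ha b hb x hx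
    set n := orderOf (Lp a) with hn
    have hn0 : 0 < n := orderOf_Lp_pos a
    have hc : ∀ t, lpow a (n - 1) * t = t * lpow a (n - 1) := lpow_comm hBol ha (n - 1)
    have hinv : a * (lpow a (n - 1) * b) = b := by
      calc a * (lpow a (n - 1) * b) = Lp a (Lp (lpow a (n - 1)) b) := rfl
        _ = (Lp a * (Lp a) ^ (n - 1)) b := by rw [Lp_lpow hBol ha]; rfl
        _ = ((Lp a) ^ n) b := by rw [← pow_succ', show n - 1 + 1 = n by omega]
        _ = b := by rw [pow_orderOf_eq_one]; rfl
    have hxeq : x = lpow a (n - 1) * b := by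
      obtain ⟨u, hu, huu⟩ := Loop'.existsUnique_mul_left a b
      exact (huu x hx).trans (huu (lpow a (n - 1) * b) hinv).symm
    rw [hxeq]
    exact hmul (lpow a (n - 1)) hc b hb
  refine ⟨hone, hmul, hldiv, ?_⟩
  intro a ha b hb y hy
  have hay : a * y = b := by rw [ha y]; exact hy
  exact hldiv a ha b hb y hay
end

section
/- Let L be a left Bol loop and let a ∈ C(L) be an element of the commutant. Then a·a ∈ C(L), i.e., (a·a)·x = x·(a·a) for all x ∈ L. -/
/-- In a left Bol loop, the square of a commutant element is in the
commutant. -/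
theorem sq_mem_commutant (L : Type*) [Loop' L] (hBol : IsBolLoop L)
    (a : L) (ha : a ∈ commutant L) :
    a * a ∈ commutant L := by
  intro x
  -- left cancellation
  have cancel : ∀ c u v : L, c * u = c * v → u = v := by
    intro c u v h
    obtain ⟨w, -, huniq⟩ := Loop'.existsUnique_mul_left c (c * v)
    exact (huniq u h).trans (huniq v rfl).symm
  -- left alternative law: a * (a * z) = (a * a) * z
  have alt : ∀ z : L, a * (a * z) = (a * a) * z := by
    intro z
    have := hBol a 1 z
    simpa [Loop'.one_mul] using this
  -- key Bol instance: a * (x * (a * a)) = (a * (x * a)) * a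
  have h1 : a * (x * (a * a)) = (a * (x * a)) * a := hBol a x a
  have h2 : a * (x * a) = (a * a) * x := by
    rw [← ha x, alt]
  have h3 : a * (x * (a * a)) = a * ((a * a) * x) := by
    rw [h1, h2, ← ha ((a * a) * x)]
  exact (cancel a _ _ h3).symm
end

section
/- Let L be a left Bol loop and let b ∈ C(L) be an element of the commutant. Let b⁻¹ denote the (two-sided) inverse of b, i.e., the element satisfying b⁻¹·b = b·b⁻¹ = 1. Then b⁻¹ ∈ C(L), i.e., b⁻¹·x = x·b⁻¹ for all x ∈ L. -/
/-- In a left Bol loop, the two-sided inverse of a commutant element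
is in the commutant. -/
theorem inv_mem_commutant (L : Type*) [Loop' L] (hBol : IsBolLoop L)
    (b bi : L) (hb : b ∈ commutant L) (hbi : bi * b = 1) (hbi' : b * bi = 1) :
    bi ∈ commutant L := by
  -- left cancellation by b
  have cancel : ∀ u v : L, b * u = b * v → u = v := by
    intro u v h
    obtain ⟨x, -, hx⟩ := Loop'.existsUnique_mul_left b (b * v)
    exact (hx u h).trans (hx v rfl).symm
  -- LIP for b : bi * (b * z) = z
  have lip : ∀ z : L, bi * (b * z) = z := by
    intro z
    apply cancel
    calc b * (bi * (b * z)) = (b * (bi * b)) * z := hBol b bi z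
      _ = b * z := by rw [hbi, Loop'.mul_one]
  -- RIP for b : (b * w) * bi = w
  have rip : ∀ w : L, (b * w) * bi = w := by
    intro w
    obtain ⟨y, hy, -⟩ := Loop'.existsUnique_mul_right b w
    have h1 : b * (y * (b * bi)) = (b * (y * b)) * bi := hBol b y bi
    rw [hbi', Loop'.mul_one, hy] at h1
    rw [← h1, hb y, hy]
  intro x
  obtain ⟨z, hz, -⟩ := Loop'.existsUnique_mul_left b x
  rw [← hz, lip z, rip z]
end

section
/- Let L be a left Bol loop and let a, b ∈ C(L) be elements of the commutant. Then (a·a)·b ∈ C(L), i.e., ((a·a)·b)·x = x·((a·a)·b) for all x ∈ L. -/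
/-!
Write `L_x` for left multiplication by `x`. The Bol identity reads `L_{x(yx)} = L_x L_y L_x`, so
`L_{x²} = L_x²`, and a left inverse `b'` of `b` has `L_{b'} = L_b⁻¹`. At an element `t` of the
commutant it becomes `t (x (s t)) = s (t (t x))` for `s ∈ C(L)`, so right multiplication by
`st = ts` equals both `L_t⁻¹ L_s L_t²` and `L_s⁻¹ L_t L_s²`. Equating the two with `t = b'` gives
`(L_b L_a)² = L_a² L_b²` for `a, b ∈ C(L)`. Since `L_b L_{a²b} = L_b L_a L_b L_a` and, by the
same identity with `s = a²`, `x ↦ b (x (a²b))` is `L_a² L_b²`, the element `a²b` commutes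
with every `x` after cancelling `b`.
-/

namespace Loop'

variable {L : Type*} [Loop' L]

theorem mul_left_bijective (g : L) : Function.Bijective (g * ·) := by
  refine ⟨fun x y h => ?_, fun z => ?_⟩
  · obtain ⟨w, -, hw⟩ := existsUnique_mul_left g (g * y)
    exact (hw x h).trans (hw y rfl).symm
  · obtain ⟨w, hw, -⟩ := existsUnique_mul_left g z
    exact ⟨w, hw⟩

noncomputable def leftMul (g : L) : Equiv.Perm L :=
  Equiv.ofBijective _ (mul_left_bijective g)

@[simp]
theorem leftMul_apply (g x : L) : leftMul g x = g * x := rfl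

theorem leftMul_one : leftMul (1 : L) = 1 :=
  Equiv.ext one_mul

end Loop'

namespace IsBolLoop

open Loop'

variable {L : Type*} [Loop' L]

theorem leftMul_mul_mul (hBol : IsBolLoop L) (x y : L) :
    leftMul (x * (y * x)) = leftMul x * leftMul y * leftMul x :=
  Equiv.ext fun z => (hBol x y z).symm

theorem mul_self_mul (hBol : IsBolLoop L) (x y : L) : x * x * y = x * (x * y) := by
  simpa [leftMul_one, Loop'.one_mul] using congrArg (· y) (hBol.leftMul_mul_mul x 1)

theorem leftMul_eq_inv_of_mul_eq_one (hBol : IsBolLoop L) {b b' : L} (h : b' * b = 1) :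
    leftMul b' = (leftMul b)⁻¹ := by
  have hBol_b := hBol.leftMul_mul_mul b b'
  rw [h, Loop'.mul_one, mul_assoc, left_eq_mul] at hBol_b
  exact eq_inv_of_mul_eq_one_left hBol_b

theorem mul_mul_mul_of_mem_commutant (hBol : IsBolLoop L) {s t : L} (hs : s ∈ commutant L)
    (ht : t ∈ commutant L) (x : L) : t * (x * (s * t)) = s * (t * (t * x)) := by
  have h := hBol t x s
  rwa [ht s, ← ht x, ← hBol.mul_self_mul, ← hs, hBol.mul_self_mul] at h

theorem mul_self_mem_commutant (hBol : IsBolLoop L) {t : L} (ht : t ∈ commutant L) :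
    t * t ∈ commutant L := fun x => by
  have h := hBol.mul_mul_mul_of_mem_commutant ht ht x
  rw [← hBol.mul_self_mul t x] at h
  exact ((mul_left_bijective t).1 h).symm

theorem mem_commutant_of_mul_eq_one (hBol : IsBolLoop L) {b b' : L} (hb : b ∈ commutant L)
    (h : b' * b = 1) : b' ∈ commutant L := fun v => by
  have hb_b' (x : L) : b * (b' * x) = x := by
    simpa using congrArg (· x) (congrArg (leftMul b * ·) (hBol.leftMul_eq_inv_of_mul_eq_one h))
  have hBol_b := hBol b (b' * (b' * v)) b'
  rwa [hb b', h, Loop'.mul_one, hb_b', ← hb, hb_b', hb_b'] at hBol_b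

theorem leftMul_mul_inv_mul_mul_sq (hBol : IsBolLoop L) {s t : L} (hs : s ∈ commutant L)
    (ht : t ∈ commutant L) :
    leftMul s * (leftMul t)⁻¹ * leftMul s * leftMul t ^ 2 = leftMul t * leftMul s ^ 2 := by
  ext x
  have hinv : (leftMul t)⁻¹ (s * (t * (t * x))) = x * (s * t) := by
    rw [Equiv.Perm.inv_eq_iff_eq]
    exact (hBol.mul_mul_mul_of_mem_commutant hs ht x).symm
  simp only [Equiv.Perm.mul_apply, sq, leftMul_apply, hinv]
  rw [hs t]
  exact hBol.mul_mul_mul_of_mem_commutant ht hs x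

theorem sq_leftMul_mul_leftMul (hBol : IsBolLoop L) {a b : L} (ha : a ∈ commutant L)
    (hb : b ∈ commutant L) : (leftMul b * leftMul a) ^ 2 = leftMul a ^ 2 * leftMul b ^ 2 := by
  obtain ⟨b', hb'b, -⟩ := Loop'.existsUnique_mul_right b 1
  have h := hBol.leftMul_mul_inv_mul_mul_sq ha (hBol.mem_commutant_of_mul_eq_one hb hb'b)
  rw [hBol.leftMul_eq_inv_of_mul_eq_one hb'b, inv_inv] at h
  calc (leftMul b * leftMul a) ^ 2
      = leftMul b * (leftMul a * leftMul b * leftMul a * (leftMul b)⁻¹ ^ 2) * leftMul b ^ 2 := by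
        rw [sq]; group
    _ = leftMul b * ((leftMul b)⁻¹ * leftMul a ^ 2) * leftMul b ^ 2 := by rw [h]
    _ = leftMul a ^ 2 * leftMul b ^ 2 := by group

end IsBolLoop

/-- In a left Bol loop, if `a` and `b` are commutant elements then
`(a * a) * b` is a commutant element. -/
theorem sq_mul_mem_commutant (L : Type*) [Loop' L] (hBol : IsBolLoop L)
    (a b : L) (ha : a ∈ commutant L) (hb : b ∈ commutant L) :
    (a * a) * b ∈ commutant L := by
  intro x
  apply (Loop'.mul_left_bijective b).1
  calc b * (a * a * b * x)
      = b * (a * (b * (a * x))) := by rw [hBol.mul_self_mul, ← hb a, hBol a b x]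
    _ = ((Loop'.leftMul b * Loop'.leftMul a) ^ 2) x := rfl
    _ = (Loop'.leftMul a ^ 2 * Loop'.leftMul b ^ 2) x := by
      rw [hBol.sq_leftMul_mul_leftMul ha hb]
    _ = a * a * (b * (b * x)) := by rw [hBol.mul_self_mul]; rfl
    _ = b * (x * (a * a * b)) :=
      (hBol.mul_mul_mul_of_mem_commutant (hBol.mul_self_mem_commutant ha) hb x).symm
end

section
/- Let L be a left Bol loop and let a ∈ C(L) be an element of the commutant. Then for every natural number n, the power a^n lies in C(L), where powers are defined by a^0 = 1 and a^(k+1) = a·a^k. Moreover, the inverse of every such power lies in C(L). -/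
section Aux

variable {L : Type*} [Loop' L]

/-- Left cancellation in a loop. -/
lemma loop_mul_left_cancel (a : L) {x y : L} (h : a * x = a * y) : x = y := by
  obtain ⟨z, _, hu⟩ := Loop'.existsUnique_mul_left a (a * y)
  exact (hu x h).trans (hu y rfl).symm

/-- Left alternativity in a left Bol loop. -/
lemma bol_left_alt (hBol : IsBolLoop L) (c z : L) : c * (c * z) = (c * c) * z := by
  have h := hBol c 1 z
  simpa only [Loop'.one_mul, Loop'.mul_one] using h

/-- In a left Bol loop, powers of a commutant element act by iterated left
multiplication. -/
lemma lpow_mul_eq_iterate (hBol : IsBolLoop L) (a : L) (ha : ∀ x : L, a * x = x * a) :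
    ∀ n : ℕ, ∀ x : L, lpow a n * x = (fun y => a * y)^[n] x := by
  intro n
  induction n using Nat.twoStepInduction with
  | zero => intro x; simp [lpow, Loop'.one_mul]
  | one => intro x; simp [lpow, Loop'.mul_one, Loop'.one_mul]
  | more n ih _ =>
    intro x
    have h1 : lpow a (n + 2) * x = (a * (lpow a n * a)) * x := by
      have : a * lpow a n = lpow a n * a := ha (lpow a n)
      simp [lpow, this]
    rw [h1, ← hBol a (lpow a n) x, ih (a * x)]
    have e1 : (fun y => a * y)^[n] (a * x) = (fun y => a * y)^[n + 1] x :=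
      (Function.iterate_succ_apply _ n x).symm
    have e2 : a * (fun y => a * y)^[n + 1] x = (fun y => a * y)^[n + 2] x :=
      (Function.iterate_succ_apply' _ (n + 1) x).symm
    rw [e1, e2, Function.iterate_succ_apply, Function.iterate_succ_apply]

/-- The successor step for powers. -/
lemma lpow_succ_mul (hBol : IsBolLoop L) (a : L) (ha : ∀ x : L, a * x = x * a)
    (n : ℕ) (x : L) : lpow a (n + 1) * x = a * (lpow a n * x) := by
  rw [lpow_mul_eq_iterate hBol a ha, lpow_mul_eq_iterate hBol a ha,
    Function.iterate_succ_apply']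

end Aux

/-- In a left Bol loop, every power of a commutant element is in the
commutant, and the (two-sided) inverse of every such power is in the commutant. -/
theorem pow_mem_commutant (L : Type*) [Loop' L] (hBol : IsBolLoop L)
    (a : L) (ha : a ∈ commutant L) :
    ∀ n : ℕ, lpow a n ∈ commutant L ∧
      ∀ b : L, b * lpow a n = 1 → lpow a n * b = 1 → b ∈ commutant L := by
  have ha' : ∀ x : L, a * x = x * a := ha
  -- First: every power is in the commutant, by induction.
  have hpow : ∀ n : ℕ, ∀ x : L, lpow a n * x = x * lpow a n := by
    intro n
    induction n with
    | zero => intro x; simp [lpow, Loop'.one_mul, Loop'.mul_one]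
    | succ n ih =>
      intro x
      apply loop_mul_left_cancel a
      -- a * (lpow a (n+1) * x) = a * (x * lpow a (n+1))
      have key : a * (x * lpow a (n + 1)) = a * (lpow a (n + 1) * x) := by
        calc a * (x * lpow a (n + 1)) = a * (x * (a * lpow a n)) := by rw [lpow]
          _ = (a * (x * a)) * lpow a n := hBol a x (lpow a n)
          _ = (a * (a * x)) * lpow a n := by rw [ha' x]
          _ = lpow a n * (a * (a * x)) := (ih (a * (a * x))).symm
          _ = (fun y => a * y)^[n] (a * (a * x)) :=
              lpow_mul_eq_iterate hBol a ha' n _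
          _ = (fun y => a * y)^[n + 2] x := by
              simp only [Function.iterate_succ_apply]
          _ = a * ((fun y => a * y)^[n + 1] x) := by
              rw [Function.iterate_succ_apply']
          _ = a * (lpow a (n + 1) * x) := by
              rw [lpow_mul_eq_iterate hBol a ha' (n + 1)]
      exact key.symm
  intro n
  refine ⟨hpow n, ?_⟩
  intro b hbc hcb
  set c := lpow a n with hc
  have hcC : ∀ x : L, c * x = x * c := hpow n
  -- Left inverse property: b * (c * z) = z
  have hlip : ∀ z : L, b * (c * z) = z := by
    intro z
    apply loop_mul_left_cancel c
    calc c * (b * (c * z)) = (c * (b * c)) * z := hBol c b z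
      _ = (c * 1) * z := by rw [hbc]
      _ = c * z := by rw [Loop'.mul_one]
  -- Key identity: ((c * c) * u) * b = c * u
  have hkey : ∀ u : L, ((c * c) * u) * b = c * u := by
    intro u
    calc ((c * c) * u) * b = (c * (c * u)) * b := by rw [bol_left_alt hBol]
      _ = (c * (u * c)) * b := by rw [hcC u]
      _ = c * (u * (c * b)) := (hBol c u b).symm
      _ = c * (u * 1) := by rw [hcb]
      _ = c * u := by rw [Loop'.mul_one]
  -- Now show b is in the commutant.
  intro x
  obtain ⟨u, hu, -⟩ := Loop'.existsUnique_mul_left (c * c) x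
  have h1 : x * b = c * u := by rw [← hu]; exact hkey u
  have h2 : b * x = c * u := by
    rw [← hu, ← bol_left_alt hBol, hlip (c * u)]
  rw [h1, h2]
end
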